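/- The set { ∏_{k∈I} (p_k + 1)/(p_k + 2) : I a finite set of indices of odd primes } is dense in [0, 1]. -/
import Mathlib


/-- The `k`-th odd prime (0-indexed). -/
noncomputable def oddPrime (k : ℕ) : ℕ := Nat.nth (fun q => Nat.Prime q ∧ q ≠ 2) k

noncomputable def opA (k : ℕ) : ℝ := ((oddPrime k : ℝ) + 1) / ((oddPrime k : ℝ) + 2)

lemma oddPrime_infinite : {q | Nat.Prime q ∧ q ≠ 2}.Infinite := by
  have : {q | Nat.Prime q ∧ q ≠ 2} = {q | Nat.Prime q} \ {2} := by
    ext q; simp [Set.mem_diff]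
  rw [this]
  exact Nat.infinite_setOf_prime.diff (Set.finite_singleton 2)

lemma oddPrime_mem (k : ℕ) : Nat.Prime (oddPrime k) ∧ oddPrime k ≠ 2 :=
  Nat.nth_mem_of_infinite oddPrime_infinite k

lemma le_oddPrime (k : ℕ) : k ≤ oddPrime k :=
  (Nat.nth_strictMono oddPrime_infinite).le_apply

lemma opA_pos (k : ℕ) : 0 < opA k := by
  unfold opA; positivity

lemma opA_lt_one (k : ℕ) : opA k < 1 := by
  unfold opA
  rw [div_lt_one (by positivity)]
  linarith

lemma opA_eq (k : ℕ) : opA k = 1 - 1 / ((oddPrime k : ℝ) + 2) := by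
  unfold opA
  field_simp
  ring

lemma not_summable_b : ¬ Summable (fun k => 1 / ((oddPrime k : ℝ) + 2)) := by
  intro h
  set S : Set ℕ := {q | Nat.Prime q ∧ q ≠ 2} with hS
  have hinj : Function.Injective (Nat.nth (fun q => Nat.Prime q ∧ q ≠ 2)) :=
    Nat.nth_injective oddPrime_infinite
  have hrange : Set.range (Nat.nth (fun q => Nat.Prime q ∧ q ≠ 2)) = S :=
    Nat.range_nth_of_infinite oddPrime_infinite
  set g : ℕ → ℝ := S.indicator (fun n => 1 / ((n : ℝ) + 2)) with hg
  have hzero : ∀ x ∉ Set.range (Nat.nth (fun q => Nat.Prime q ∧ q ≠ 2)), g x = 0 := by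
    intro x hx
    rw [hrange] at hx
    exact Set.indicator_of_notMem hx _
  have hgs : Summable g := by
    rw [← hinj.summable_iff hzero]
    apply h.congr
    intro k
    have : oddPrime k ∈ S := oddPrime_mem k
    simp only [Function.comp_apply, hg]
    rw [show Nat.nth (fun q => Nat.Prime q ∧ q ≠ 2) k = oddPrime k from rfl,
      Set.indicator_of_mem this]
  -- compare with indicator of primes of 1/n
  apply not_summable_one_div_on_primes
  have h2 : Summable (fun n : ℕ => 3 * g n + if n = 2 then (1/2 : ℝ) else 0) := by
    apply ((hgs.mul_left 3).add _)
    apply summable_of_ne_finset_zero (s := {2})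
    intro n hn
    simp only [Finset.mem_singleton] at hn
    simp [hn]
  apply h2.of_nonneg_of_le
  · intro n
    apply Set.indicator_nonneg
    intro x _
    positivity
  · intro n
    by_cases hp : Nat.Prime n
    · by_cases h2' : n = 2
      · subst h2'
        have h1 : ({p | Nat.Prime p}.indicator (fun n : ℕ => (1:ℝ)/n)) 2 = 1/2 := by
          rw [Set.indicator_of_mem (by simp [Nat.prime_two])]
          norm_num
        rw [h1]
        have : 0 ≤ g 2 := Set.indicator_nonneg (fun x _ => by positivity) 2
        simp only [eq_self_iff_true, if_true]
        linarith
      · have hmem : n ∈ S := ⟨hp, h2'⟩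
        rw [Set.indicator_of_mem (show n ∈ {p | Nat.Prime p} from hp), hg, Set.indicator_of_mem hmem, if_neg h2']
        have hn1 : (1:ℝ) ≤ n := by exact_mod_cast hp.one_lt.le
        rw [add_zero, mul_one_div, div_le_div_iff₀ (by linarith) (by linarith)]
        linarith
    · rw [Set.indicator_of_notMem (show n ∉ {p | Nat.Prime p} from hp)]
      have : 0 ≤ g n := Set.indicator_nonneg (fun x _ => by positivity) n
      positivity

lemma opA_tendsto_one : Filter.Tendsto opA Filter.atTop (nhds 1) := by
  have hb : Filter.Tendsto (fun k => 1 / ((oddPrime k : ℝ) + 2)) Filter.atTop (nhds 0) := by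
    apply squeeze_zero (fun k => by positivity)
      (g := fun k : ℕ => 1 / ((k : ℝ) + 1))
    · intro k
      apply div_le_div_of_nonneg_left one_pos.le (by positivity)
      have := le_oddPrime k
      have : (k : ℝ) ≤ oddPrime k := by exact_mod_cast this
      linarith
    · exact tendsto_one_div_add_atTop_nhds_zero_nat
  have := (tendsto_const_nhds (f := Filter.atTop (α := ℕ)) (x := (1:ℝ))).sub hb
  simp only [sub_zero] at this
  apply this.congr
  intro k
  exact (opA_eq k).symm

lemma prod_opA_tendsto_zero (N : ℕ) :
    Filter.Tendsto (fun m => ∏ k ∈ Finset.range m, opA (N + k)) Filter.atTop (nhds 0) := by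
  have hbn : ∀ k, (0:ℝ) ≤ 1 / ((oddPrime (N + k) : ℝ) + 2) := fun k => by positivity
  have hns : ¬ Summable (fun k => 1 / ((oddPrime (N + k) : ℝ) + 2)) := by
    intro h
    exact not_summable_b ((summable_nat_add_iff N).mp (h.congr (fun k => by rw [add_comm k N])))
  have hsum : Filter.Tendsto (fun m => ∑ k ∈ Finset.range m, 1 / ((oddPrime (N + k) : ℝ) + 2))
      Filter.atTop Filter.atTop :=
    (not_summable_iff_tendsto_nat_atTop_of_nonneg hbn).mp hns
  have hexp : Filter.Tendsto
      (fun m => Real.exp (-∑ k ∈ Finset.range m, 1 / ((oddPrime (N + k) : ℝ) + 2)))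
      Filter.atTop (nhds 0) :=
    Real.tendsto_exp_neg_atTop_nhds_zero.comp hsum
  apply squeeze_zero (fun m => Finset.prod_nonneg (fun k _ => (opA_pos _).le)) _ hexp
  intro m
  rw [← Finset.sum_neg_distrib, Real.exp_sum]
  apply Finset.prod_le_prod (fun k _ => (opA_pos _).le)
  intro k _
  rw [opA_eq]
  have := Real.add_one_le_exp (-(1 / ((oddPrime (N + k) : ℝ) + 2)))
  linarith

noncomputable def gr (x : ℝ) : ℕ → ℝ
  | 0 => 1
  | n+1 => if x ≤ gr x n * opA n then gr x n * opA n else gr x n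

lemma gr_ge {x : ℝ} (hx1 : x ≤ 1) : ∀ n, x ≤ gr x n := by
  intro n
  induction n with
  | zero => exact hx1
  | succ n ih =>
    rw [gr]
    split_ifs with h
    · exact h
    · exact ih

lemma gr_prod (x : ℝ) : ∀ n, ∃ I : Finset ℕ, I ⊆ Finset.range n ∧
    gr x n = ∏ k ∈ I, opA k := by
  intro n
  induction n with
  | zero => exact ⟨∅, by simp, by simp [gr]⟩
  | succ n ih =>
    obtain ⟨I, hIs, hIp⟩ := ih
    rw [gr]
    split_ifs with h
    · refine ⟨insert n I, ?_, ?_⟩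
      · intro k hk
        rcases Finset.mem_insert.mp hk with rfl | hk
        · exact Finset.self_mem_range_succ k
        · exact Finset.range_subset_range.mpr (Nat.le_succ n) (hIs hk)
      · rw [Finset.prod_insert (fun hn => (Finset.mem_range.mp (hIs hn)).false), hIp,
          mul_comm]
    · exact ⟨I, hIs.trans (Finset.range_subset_range.mpr (Nat.le_succ n)), hIp⟩

lemma gr_eventually_small {x : ℝ} (hx0 : 0 < x) (hx1 : x ≤ 1) {ε : ℝ} (hε : 0 < ε) :
    ∃ n, gr x n < x + ε := by
  by_contra hcon
  push_neg at hcon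
  -- so ∀ n, x + ε ≤ gr x n
  have hc1 : x / (x + ε) < 1 := by
    rw [div_lt_one (by linarith)]; linarith
  obtain ⟨N, hN⟩ := (Filter.tendsto_atTop'.mp opA_tendsto_one
    (Set.Ioi (x / (x + ε))) (Ioi_mem_nhds hc1))
  have hstep : ∀ n, N ≤ n → gr x (n + 1) = gr x n * opA n := by
    intro n hn
    have ha : x / (x + ε) < opA n := hN n hn
    have hg : x + ε ≤ gr x n := hcon n
    have : x ≤ gr x n * opA n := by
      have h1 : x / (x + ε) * (x + ε) ≤ opA n * gr x n := by
        apply mul_le_mul ha.le hg (by linarith) (opA_pos n).le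
      rw [div_mul_cancel₀ _ (by linarith : x + ε ≠ 0)] at h1
      linarith [mul_comm (opA n) (gr x n) ▸ h1]
    rw [gr, if_pos this]
  have hform : ∀ m, gr x (N + m) = gr x N * ∏ k ∈ Finset.range m, opA (N + k) := by
    intro m
    induction m with
    | zero => simp
    | succ m ih =>
      rw [← Nat.add_assoc, hstep (N + m) (Nat.le_add_right N m), ih,
        Finset.prod_range_succ, mul_assoc]
  have htend : Filter.Tendsto (fun m => gr x (N + m)) Filter.atTop (nhds 0) := by
    have := (prod_opA_tendsto_zero N).const_mul (gr x N)
    rw [mul_zero] at this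
    exact this.congr (fun m => (hform m).symm)
  have : x + ε ≤ 0 := ge_of_tendsto htend (Filter.Eventually.of_forall (fun m => hcon (N + m)))
  linarith

/-- The set of finite products `∏_{k ∈ I} (p_k + 1)/(p_k + 2)` over finite sets
of indices of odd primes is dense in `[0, 1]`. -/
theorem closure_finite_products_eq_Icc :
    closure {s : ℝ | ∃ I : Finset ℕ,
      s = ∏ k ∈ I, ((oddPrime k + 1 : ℝ) / (oddPrime k + 2))} = Set.Icc 0 1 := by
  set T : Set ℝ := {s : ℝ | ∃ I : Finset ℕ,
      s = ∏ k ∈ I, ((oddPrime k + 1 : ℝ) / (oddPrime k + 2))} with hT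
  have hTa : ∀ s ∈ T, ∃ I : Finset ℕ, s = ∏ k ∈ I, opA k := fun s hs => hs
  have hmem : ∀ I : Finset ℕ, (∏ k ∈ I, opA k) ∈ T := fun I => ⟨I, rfl⟩
  apply subset_antisymm
  · apply closure_minimal _ isClosed_Icc
    rintro s ⟨I, rfl⟩
    constructor
    · exact Finset.prod_nonneg (fun k _ => (opA_pos k).le)
    · exact Finset.prod_le_one (fun k _ => (opA_pos k).le) (fun k _ => (opA_lt_one k).le)
  · rintro x ⟨hx0, hx1⟩
    rcases eq_or_lt_of_le hx0 with rfl | hx0'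
    · -- x = 0 : limit of full products
      have : Filter.Tendsto (fun m => ∏ k ∈ Finset.range m, opA k) Filter.atTop (nhds 0) := by
        have := prod_opA_tendsto_zero 0
        simpa using this
      exact mem_closure_of_tendsto this
        (Filter.Eventually.of_forall (fun m => hmem (Finset.range m)))
    · rw [Metric.mem_closure_iff]
      intro ε hε
      obtain ⟨n, hn⟩ := gr_eventually_small hx0' hx1 hε
      obtain ⟨I, _, hIp⟩ := gr_prod x n
      refine ⟨gr x n, hIp ▸ hmem I, ?_⟩
      have hge := gr_ge hx1 n
      rw [Real.dist_eq, abs_of_nonpos (by linarith)]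
      linarith
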